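/- Let Ω ⊆ ℝⁿ be open, m ∈ [2, ∞), f : Ω×ℝ → ℝ continuous, and g : ℝ → ℝ continuous satisfying (g₀). Define M_m(p, X) = |p|^{m−4}(|p|² tr X + (m−2)⟨Xp, p⟩) for p ≠ 0 and M_m(0, X) = 0, and set h(x, s) = e^{(m−1)G(Φ_g⁻¹(s))} f(x, Φ_g⁻¹(s)). Then u ∈ C²(Ω) satisfies M_m(Du, D²u) + (m−1) g(u)|Du|^m + f(x, u) = 0 at every point of Ω if and only if v = Φ_g ∘ u satisfies M_m(Dv, D²v) + h(x, v) = 0 at every point of Ω. -/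

import Mathlib

/-!
Since `Φ_g' = e^G` and `Φ_g'' = g e^G`, the chain rule gives `Dv = e^{G(u)} Du` and
`D²v = e^{G(u)} (D²u + g(u) Du ⊗ Du)`. The symbol `M_m` is `(m-1)`-homogeneous under the joint
scaling `(p, X) ↦ (a p, a X)`, `a > 0`, and adding `c p ⊗ p` to `X` adds `(m-1) c |p|^m`. Hence
`M_m(Dv, D²v) = e^{(m-1)G(u)} (M_m(Du, D²u) + (m-1) g(u) |Du|^m)`, while
`h(x, v) = e^{(m-1)G(u)} f(x, u)`; the two equations differ by the positive factor `e^{(m-1)G(u)}`.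
-/

open Real Filter Set

/-- Gradient of `u` at `x` (vector of partial derivatives). -/
noncomputable def vgrad {n : ℕ} (u : (Fin n → ℝ) → ℝ) (x : Fin n → ℝ) : Fin n → ℝ :=
  fun i => fderiv ℝ u x (Pi.single i 1)

/-- Hessian matrix of `u` at `x`. -/
noncomputable def vhess {n : ℕ} (u : (Fin n → ℝ) → ℝ) (x : Fin n → ℝ) :
    Matrix (Fin n) (Fin n) ℝ :=
  Matrix.of fun i j => fderiv ℝ (fun y => fderiv ℝ u y (Pi.single j 1)) x (Pi.single i 1)

noncomputable def Gg (g : ℝ → ℝ) (s : ℝ) : ℝ := ∫ τ in (0:ℝ)..s, g τ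

noncomputable def Phig (g : ℝ → ℝ) (t : ℝ) : ℝ := ∫ s in (0:ℝ)..t, Real.exp (Gg g s)

/-- Condition `(g₀)`. -/
def g0cond (g : ℝ → ℝ) : Prop :=
  ∃ s₀ : ℝ, 0 ≤ s₀ ∧ (∀ s, s₀ ≤ s → 0 ≤ g s) ∧ (∀ s, s ≤ -s₀ → g s ≤ 0)
/-- Euclidean norm |p| of a vector in ℝⁿ (as a pi type). -/
noncomputable def enorm' {n : ℕ} (p : Fin n → ℝ) : ℝ := Real.sqrt (∑ i, p i ^ 2)

open scoped Classical in
/-- The symbol of the m-Laplace operator in non-divergence form, with M_m(0,X) = 0 and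
M_m(p,X) = |p|^{m-4} (|p|² tr X + (m-2) ⟨Xp, p⟩) for p ≠ 0, real powers being rpow. -/
noncomputable def mLaplaceOp {n : ℕ} (m : ℝ) (p : Fin n → ℝ)
    (X : Matrix (Fin n) (Fin n) ℝ) : ℝ :=
  if p = 0 then 0
  else enorm' p ^ (m - 4) *
    (enorm' p ^ (2 : ℕ) * Matrix.trace X + (m - 2) * dotProduct (Matrix.mulVec X p) p)

open Topology Matrix

section Primitives

variable {g : ℝ → ℝ}

lemma Gg_hasDerivAt (hg : Continuous g) (t : ℝ) : HasDerivAt (Gg g) (g t) t :=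
  (hg.integral_hasStrictDerivAt 0 t).hasDerivAt

lemma continuous_Gg (hg : Continuous g) : Continuous (Gg g) :=
  continuous_iff_continuousAt.2 fun t => (Gg_hasDerivAt hg t).continuousAt

lemma Phig_hasDerivAt (hg : Continuous g) (t : ℝ) :
    HasDerivAt (Phig g) (exp (Gg g t)) t :=
  ((continuous_exp.comp (continuous_Gg hg)).integral_hasStrictDerivAt 0 t).hasDerivAt

lemma hasDerivAt_exp_Gg (hg : Continuous g) (t : ℝ) :
    HasDerivAt (fun s => exp (Gg g s)) (g t * exp (Gg g t)) t := by
  simpa [mul_comm] using (Gg_hasDerivAt hg t).exp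

end Primitives

section ChainRule

variable {n : ℕ} {u : (Fin n → ℝ) → ℝ} {x : Fin n → ℝ}

lemma vgrad_comp {φ : ℝ → ℝ} {φ' : ℝ} (hφ : HasDerivAt φ φ' (u x))
    (hu : DifferentiableAt ℝ u x) : vgrad (φ ∘ u) x = φ' • vgrad u x := by
  ext i
  simp [vgrad, (hφ.comp_hasFDerivAt x hu.hasFDerivAt).fderiv]

lemma vhess_comp {φ φ' : ℝ → ℝ} {φ'' : ℝ} (hφ : ∀ t, HasDerivAt φ (φ' t) t)
    (hφ' : HasDerivAt φ' φ'' (u x)) (hu : ∀ᶠ y in 𝓝 x, DifferentiableAt ℝ u y)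
    (hDu : DifferentiableAt ℝ (fderiv ℝ u) x) :
    vhess (φ ∘ u) x = φ'' • vecMulVec (vgrad u x) (vgrad u x) + φ' (u x) • vhess u x := by
  ext i j
  have hDφu : (fun y => fderiv ℝ (φ ∘ u) y (Pi.single j 1)) =ᶠ[𝓝 x]
      fun y => φ' (u y) * fderiv ℝ u y (Pi.single j 1) := by
    filter_upwards [hu] with y hy
    simp [((hφ (u y)).comp_hasFDerivAt y hy.hasFDerivAt).fderiv]
  have hprod : HasFDerivAt (fun y => φ' (u y) * fderiv ℝ u y (Pi.single j 1)) _ x :=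
    (hφ'.comp_hasFDerivAt x hu.self_of_nhds.hasFDerivAt).mul
      (hDu.clm_apply (differentiableAt_const (Pi.single j 1))).hasFDerivAt
  simp only [vhess, vgrad, Matrix.of_apply, hDφu.fderiv_eq, hprod.fderiv, Matrix.add_apply,
    Matrix.smul_apply, vecMulVec_apply, _root_.add_apply, _root_.smul_apply, smul_eq_mul,
    Function.comp_apply]
  ring

end ChainRule

section Symbol

variable {n : ℕ}

lemma enorm'_sq (p : Fin n → ℝ) : enorm' p ^ 2 = p ⬝ᵥ p := by
  rw [enorm', sq_sqrt (Finset.sum_nonneg fun i _ => sq_nonneg _)]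
  simp [dotProduct, sq]

lemma enorm'_zero : enorm' (0 : Fin n → ℝ) = 0 := by
  simp [enorm']

lemma enorm'_smul (p : Fin n → ℝ) {a : ℝ} (ha : 0 ≤ a) : enorm' (a • p) = a * enorm' p := by
  simp only [enorm', Pi.smul_apply, smul_eq_mul, mul_pow, ← Finset.mul_sum]
  rw [sqrt_mul (sq_nonneg a), sqrt_sq ha]

lemma enorm'_pos {p : Fin n → ℝ} (hp : p ≠ 0) : 0 < enorm' p := by
  obtain ⟨i, hi⟩ := Function.ne_iff.1 hp
  exact sqrt_pos.2 <|
    Finset.sum_pos' (fun j _ => sq_nonneg _) ⟨i, Finset.mem_univ i, sq_pos_of_ne_zero hi⟩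

lemma mLaplaceOp_zero_left (m : ℝ) (X : Matrix (Fin n) (Fin n) ℝ) :
    mLaplaceOp m (0 : Fin n → ℝ) X = 0 :=
  if_pos rfl

lemma mLaplaceOp_of_ne_zero (m : ℝ) {p : Fin n → ℝ} (hp : p ≠ 0)
    (X : Matrix (Fin n) (Fin n) ℝ) :
    mLaplaceOp m p X = enorm' p ^ (m - 4) * (enorm' p ^ 2 * trace X + (m - 2) * (X *ᵥ p ⬝ᵥ p)) :=
  if_neg hp

lemma mLaplaceOp_smul_smul (m : ℝ) (p : Fin n → ℝ) (X : Matrix (Fin n) (Fin n) ℝ) {a : ℝ}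
    (ha : 0 < a) : mLaplaceOp m (a • p) (a • X) = a ^ (m - 1) * mLaplaceOp m p X := by
  rcases eq_or_ne p 0 with rfl | hp
  · simp [mLaplaceOp_zero_left]
  rw [mLaplaceOp_of_ne_zero m hp, mLaplaceOp_of_ne_zero m (smul_ne_zero ha.ne' hp),
    enorm'_smul p ha.le, mul_rpow ha.le (enorm'_pos hp).le, trace_smul, smul_mulVec,
    mulVec_smul, show m - 1 = (m - 4) + (3 : ℕ) by norm_num; ring, rpow_add ha, rpow_natCast]
  simp only [smul_dotProduct, dotProduct_smul, smul_eq_mul]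
  ring

lemma mLaplaceOp_add_smul_vecMulVec {m : ℝ} (hm : m ≠ 0) (p : Fin n → ℝ)
    (X : Matrix (Fin n) (Fin n) ℝ) (c : ℝ) :
    mLaplaceOp m p (X + c • vecMulVec p p) = mLaplaceOp m p X + (m - 1) * c * enorm' p ^ m := by
  rcases eq_or_ne p 0 with rfl | hp
  · simp [mLaplaceOp_zero_left, enorm'_zero, zero_rpow hm]
  have hr := enorm'_pos hp
  have hrm : enorm' p ^ m = enorm' p ^ (m - 4) * enorm' p ^ (4 : ℕ) := by
    rw [← rpow_natCast, ← rpow_add hr]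
    norm_num
  rw [mLaplaceOp_of_ne_zero m hp, mLaplaceOp_of_ne_zero m hp, trace_add, trace_smul,
    trace_vecMulVec, add_mulVec, smul_mulVec, vecMulVec_mulVec, op_smul_eq_smul, add_dotProduct,
    smul_dotProduct, smul_dotProduct, ← enorm'_sq, hrm]
  simp only [smul_eq_mul]
  ring

end Symbol

lemma mLaplaceOp_Phig_comp {n : ℕ} {m : ℝ} (hm : m ≠ 0) {g : ℝ → ℝ} (hg : Continuous g)
    {Ω : Set (Fin n → ℝ)} (hΩ : IsOpen Ω) {u : (Fin n → ℝ) → ℝ} (hu : ContDiffOn ℝ 2 u Ω)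
    {x : Fin n → ℝ} (hx : x ∈ Ω) :
    mLaplaceOp m (vgrad (Phig g ∘ u) x) (vhess (Phig g ∘ u) x) =
      exp (Gg g (u x)) ^ (m - 1) *
        (mLaplaceOp m (vgrad u x) (vhess u x) + (m - 1) * g (u x) * enorm' (vgrad u x) ^ m) := by
  have hdiff : ∀ᶠ y in 𝓝 x, DifferentiableAt ℝ u y := by
    filter_upwards [hΩ.mem_nhds hx] with y hy
    exact (hu.contDiffAt (hΩ.mem_nhds hy)).differentiableAt (by norm_num)
  have hDu : DifferentiableAt ℝ (fderiv ℝ u) x :=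
    ((hu.fderiv_of_isOpen hΩ (by norm_num : (1 : WithTop ℕ∞) + 1 ≤ 2)).contDiffAt
      (hΩ.mem_nhds hx)).differentiableAt (by norm_num)
  rw [vgrad_comp (Phig_hasDerivAt hg _) hdiff.self_of_nhds,
    vhess_comp (Phig_hasDerivAt hg) (hasDerivAt_exp_Gg hg _) hdiff hDu, mul_comm (g (u x)),
    mul_smul, add_comm, ← smul_add, mLaplaceOp_smul_smul m _ _ (exp_pos _),
    mLaplaceOp_add_smul_vecMulVec hm]

theorem stmt16_general {n : ℕ} (Ω : Set (Fin n → ℝ)) (hΩ : IsOpen Ω)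
    (m : ℝ) (hm : 2 ≤ m)
    (f : (Fin n → ℝ) → ℝ → ℝ)
    (g : ℝ → ℝ) (hg : Continuous g)
    (Φinv : ℝ → ℝ) (hleft : ∀ t : ℝ, Φinv (Phig g t) = t)
    (u : (Fin n → ℝ) → ℝ) (hu : ContDiffOn ℝ 2 u Ω) :
    (∀ x ∈ Ω, mLaplaceOp m (vgrad u x) (vhess u x)
        + (m - 1) * g (u x) * enorm' (vgrad u x) ^ m + f x (u x) = 0) ↔
    (∀ x ∈ Ω, mLaplaceOp m (vgrad (Phig g ∘ u) x) (vhess (Phig g ∘ u) x)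
        + Real.exp ((m - 1) * Gg g (Φinv ((Phig g ∘ u) x)))
            * f x (Φinv ((Phig g ∘ u) x)) = 0) := by
  refine forall₂_congr fun x hx => ?_
  rw [Function.comp_apply, hleft, mLaplaceOp_Phig_comp (by linarith) hg hΩ hu hx,
    mul_comm (m - 1) (Gg g (u x)), exp_mul, ← mul_add,
    mul_eq_zero_iff_left (rpow_pos_of_pos (exp_pos _) _).ne']

/-- m-Laplacian, m ∈ [2,∞): u ∈ C²(Ω) solves
M_m(Du,D²u) + (m-1)g(u)|Du|^m + f(x,u) = 0 iff v = Φ_g ∘ u solves M_m(Dv,D²v) + h(x,v) = 0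
with h(x,s) = e^{(m-1)G(Φ_g⁻¹(s))} f(x, Φ_g⁻¹(s)). -/
theorem stmt16 {n : ℕ} (Ω : Set (Fin n → ℝ)) (hΩ : IsOpen Ω)
    (m : ℝ) (hm : 2 ≤ m)
    (f : (Fin n → ℝ) → ℝ → ℝ)
    (hf : ContinuousOn (fun q : (Fin n → ℝ) × ℝ => f q.1 q.2) (Ω ×ˢ Set.univ))
    (g : ℝ → ℝ) (hg : Continuous g) (hg0 : g0cond g)
    (Φinv : ℝ → ℝ) (hleft : ∀ t : ℝ, Φinv (Phig g t) = t)
    (hright : ∀ s : ℝ, Phig g (Φinv s) = s)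
    (u : (Fin n → ℝ) → ℝ) (hu : ContDiffOn ℝ 2 u Ω) :
    (∀ x ∈ Ω, mLaplaceOp m (vgrad u x) (vhess u x)
        + (m - 1) * g (u x) * enorm' (vgrad u x) ^ m + f x (u x) = 0) ↔
    (∀ x ∈ Ω, mLaplaceOp m (vgrad (Phig g ∘ u) x) (vhess (Phig g ∘ u) x)
        + Real.exp ((m - 1) * Gg g (Φinv ((Phig g ∘ u) x)))
            * f x (Φinv ((Phig g ∘ u) x)) = 0) :=
  stmt16_general Ω hΩ m hm f g hg Φinv hleft u hu
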